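/- arXiv:1508.07902 — 4 statements merged into one kernel-verified Lean document; each statement's English description precedes it below -/
import Mathlib

section
/- Let Λ ⊆ ℝ^I be a compact convex set containing δ(X) (in particular any Λ containing the marginal polytope M = conv δ(X)). If a node-wise substitution p is strictly Λ-improving for f, then p is strictly improving for f. -/
/-!
Evaluated at an integral point `δ(x) ∈ Λ`, the relaxed objective `⟨f − [p]ᵀf, δ(x)⟩` equals
`E_f(x) − E_f(p(x))`, so it is nonnegative by minimality. If it vanished, `δ(x)` would be a
minimizer and hence fixed by `[p]`; since `[p]δ(x) = δ(p(x))` and `δ` is injective, this forces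
`p(x) = x`.
-/

open Finset

noncomputable section

variable {V : Type*} [Fintype V] [DecidableEq V]
variable {X : V → Type*} [∀ v, Fintype (X v)] [∀ v, DecidableEq (X v)]
variable {E : Finset (V × V)}

/-- The index set `I`: the constant component `∅`, unary components `(u, i)` and
pairwise components `(uv, ij)` for edges `uv ∈ E`. -/
abbrev GIdx (X : V → Type*) (E : Finset (V × V)) : Type _ :=
  Unit ⊕ (Σ v : V, X v) ⊕ (Σ e : {e : V × V // e ∈ E}, X e.1.1 × X e.1.2)

/-- Vectors in `ℝ^I` (cost vectors and relaxed labelings live in the same space). -/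
abbrev GVec (X : V → Type*) (E : Finset (V × V)) : Type _ := GIdx X E → ℝ

/-- Index of the constant component. -/
def cIdx : GIdx X E := Sum.inl ()

/-- Index of the unary component `(v, i)`. -/
def uIdx (v : V) (i : X v) : GIdx X E := Sum.inr (Sum.inl ⟨v, i⟩)

/-- Index of the pairwise component `(uv, ij)` of the edge `e = uv ∈ E`. -/
def pIdx (e : {e : V × V // e ∈ E}) (i : X e.1.1) (j : X e.1.2) : GIdx X E :=
  Sum.inr (Sum.inr ⟨e, (i, j)⟩)

/-- The energy `E_f(x) = f_∅ + Σ_v f_v(x_v) + Σ_{uv∈E} f_{uv}(x_u,x_v)`. -/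
def energy (f : GVec X E) (x : ∀ v, X v) : ℝ :=
  f cIdx + ∑ v : V, f (uIdx v (x v)) +
    ∑ e : {e : V × V // e ∈ E}, f (pIdx e (x e.1.1) (x e.1.2))

/-- The standard inner product on `ℝ^I`. -/
def dotp (f μ : GVec X E) : ℝ := ∑ idx : GIdx X E, f idx * μ idx

/-- The lifting (overcomplete representation) `δ : X → ℝ^I`. -/
def lift (x : ∀ v, X v) : GVec X E := fun idx =>
  match idx with
  | Sum.inl _ => 1
  | Sum.inr (Sum.inl ⟨v, i⟩) => if x v = i then 1 else 0
  | Sum.inr (Sum.inr ⟨e, (i, j)⟩) => if x e.1.1 = i ∧ x e.1.2 = j then 1 else 0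

/-- Application of a node-wise substitution to a labeling: `p(x)_v = p_v(x_v)`. -/
def applySub (p : ∀ v, X v → X v) (x : ∀ v, X v) : ∀ v, X v := fun v => p v (x v)

/-- All the component maps `p_v` are idempotent. -/
def NodewiseIdem (p : ∀ v, X v → X v) : Prop := ∀ (v : V) (i : X v), p v (p v i) = p v i

/-- `p` is strictly improving for the cost vector `f`:
`E_f(p(x)) < E_f(x)` whenever `p(x) ≠ x`. -/
def StrictlyImproving (f : GVec X E) (p : ∀ v, X v → X v) : Prop :=
  ∀ x : ∀ v, X v, applySub p x ≠ x → energy f (applySub p x) < energy f x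

/-- The adjoint `[p]ᵀ` of the linear extension of a node-wise substitution `p`,
acting on cost vectors: `([p]ᵀ f)_∅ = f_∅`, `([p]ᵀ f)_u(i) = f_u(p_u(i))`,
`([p]ᵀ f)_{uv}(i,j) = f_{uv}(p_u(i), p_v(j))`. -/
def Padj (p : ∀ v, X v → X v) (f : GVec X E) : GVec X E := fun idx =>
  match idx with
  | Sum.inl _ => f cIdx
  | Sum.inr (Sum.inl ⟨v, i⟩) => f (uIdx v (p v i))
  | Sum.inr (Sum.inr ⟨e, (i, j)⟩) => f (pIdx e (p e.1.1 i) (p e.1.2 j))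

/-- The linear extension `[p] : ℝ^I → ℝ^I` of a node-wise substitution `p`
(the adjoint of `Padj p` with respect to `dotp`): it satisfies `δ(p(x)) = [p] δ(x)`. -/
def Pmap (p : ∀ v, X v → X v) (μ : GVec X E) : GVec X E := fun idx =>
  match idx with
  | Sum.inl _ => μ cIdx
  | Sum.inr (Sum.inl ⟨v, i⟩) => ∑ i' : X v, if p v i' = i then μ (uIdx v i') else 0
  | Sum.inr (Sum.inr ⟨e, (i, j)⟩) =>
      ∑ i' : X e.1.1, ∑ j' : X e.1.2,
        if p e.1.1 i' = i ∧ p e.1.2 j' = j then μ (pIdx e i' j') else 0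

/-- `p` is strictly `Λ`-improving for `f` (`p ∈ S_f`):
`min_{μ∈Λ} ⟨f − [p]ᵀf, μ⟩ = 0` and every minimizer `μ` satisfies `[p]μ = μ`. -/
def StrictlyLambdaImproving (Λ : Set (GVec X E)) (f : GVec X E)
    (p : ∀ v, X v → X v) : Prop :=
  IsLeast {r : ℝ | ∃ μ ∈ Λ, dotp (f - Padj p f) μ = r} 0 ∧
    ∀ μ ∈ Λ, dotp (f - Padj p f) μ = 0 → Pmap p μ = μ

/-- The subset-to-one substitution determined by a test labeling `y` and
sets `Y_v` of labels replaced by `y_v`. -/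
def subToOne (y : ∀ v, X v) (Y : ∀ v, Finset (X v)) : ∀ v, X v → X v :=
  fun v i => if i ∈ Y v then y v else i

/-- Membership in the class `P^{2,y}` of subset-to-one substitutions. -/
def InPtwo (y : ∀ v, X v) (p : ∀ v, X v → X v) : Prop :=
  ∃ Y : ∀ v, Finset (X v), (∀ v, y v ∉ Y v) ∧
    ∀ (v : V) (i : X v), p v i = if i ∈ Y v then y v else i

/-- The local polytope `Λ`. -/
def localPolytope (X : V → Type*) [∀ v, Fintype (X v)] (E : Finset (V × V)) :
    Set (GVec X E) :=
  { μ | (∀ idx, 0 ≤ μ idx) ∧ μ cIdx = 1 ∧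
      (∀ u : V, ∑ i : X u, μ (uIdx u i) = μ cIdx) ∧
      (∀ (e : {e : V × V // e ∈ E}) (i : X e.1.1),
        ∑ j : X e.1.2, μ (pIdx e i j) = μ (uIdx e.1.1 i)) ∧
      (∀ (e : {e : V × V // e ∈ E}) (j : X e.1.2),
        ∑ i : X e.1.1, μ (pIdx e i j) = μ (uIdx e.1.2 j)) }

/-- A dual vector `φ`: for each edge `uv ∈ E` messages `φ_{uv} : X_u → ℝ` (to the tail)
and `φ_{vu} : X_v → ℝ` (to the head), and a number `φ_u` for every node. -/
structure GDual (X : V → Type*) (E : Finset (V × V)) where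
  fwd : ∀ e : {e : V × V // e ∈ E}, X e.1.1 → ℝ
  bwd : ∀ e : {e : V × V // e ∈ E}, X e.1.2 → ℝ
  nd : V → ℝ

/-- Reparametrized unary cost `g^φ_u(i) = g_u(i) + Σ_{v∈nb(u)} φ_{uv}(i) − φ_u`. -/
def repUn (g : GVec X E) (φ : GDual X E) (u : V) (i : X u) : ℝ :=
  g (uIdx u i) +
    (∑ e : {e : V × V // e ∈ E},
      ((if h : e.1.1 = u then φ.fwd e (cast (congrArg X h.symm) i) else 0) +
        (if h : e.1.2 = u then φ.bwd e (cast (congrArg X h.symm) i) else 0))) -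
    φ.nd u

/-- Reparametrized pairwise cost `g^φ_{uv}(i,j) = g_{uv}(i,j) − φ_{uv}(i) − φ_{vu}(j)`. -/
def repPw (g : GVec X E) (φ : GDual X E) (e : {e : V × V // e ∈ E})
    (i : X e.1.1) (j : X e.1.2) : ℝ :=
  g (pIdx e i j) - φ.fwd e i - φ.bwd e j

/-- Reparametrized constant `g^φ_∅ = g_∅ + Σ_u φ_u` (the dual lower bound). -/
def repC (g : GVec X E) (φ : GDual X E) : ℝ := g cIdx + ∑ u : V, φ.nd u

/-- Dual feasibility: `g^φ ≥ 0` componentwise. -/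
def DualFeasible (g : GVec X E) (φ : GDual X E) : Prop :=
  (∀ (u : V) (i : X u), 0 ≤ repUn g φ u i) ∧
    ∀ (e : {e : V × V // e ∈ E}) (i : X e.1.1) (j : X e.1.2), 0 ≤ repPw g φ e i j

/-- Arc consistency of the reparametrized cost `g^φ`. -/
def ArcConsistent (g : GVec X E) (φ : GDual X E) : Prop :=
  (∀ (e : {e : V × V // e ∈ E}) (i : X e.1.1) (j : X e.1.2),
      repPw g φ e i j = 0 → repUn g φ e.1.1 i = 0 ∧ repUn g φ e.1.2 j = 0) ∧
  (∀ (e : {e : V × V // e ∈ E}) (i : X e.1.1),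
      repUn g φ e.1.1 i = 0 → ∃ j : X e.1.2, repPw g φ e i j = 0) ∧
  (∀ (e : {e : V × V // e ∈ E}) (j : X e.1.2),
      repUn g φ e.1.2 j = 0 → ∃ i : X e.1.1, repPw g φ e i j = 0)

/-- The reduced cost vector `ḡ` associated with the subset-to-one substitution `p ∈ P^{2,y}`
given by the sets `Y_v` (where `g = f − [p]ᵀ f`). -/
def reduced (f : GVec X E) (y : ∀ v, X v) (Y : ∀ v, Finset (X v)) : GVec X E :=
  fun idx =>
    match idx with
    | Sum.inl _ => 0
    | Sum.inr (Sum.inl ⟨v, i⟩) => (f - Padj (subToOne y Y) f) (uIdx v i)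
    | Sum.inr (Sum.inr ⟨e, (i, j)⟩) =>
        let g : GVec X E := f - Padj (subToOne y Y) f
        let dvu : ℝ := sInf ((fun i' => g (pIdx e i' j)) '' {i' : X e.1.1 | i' ∉ Y e.1.1})
        let duv : ℝ := sInf ((fun j' => g (pIdx e i j')) '' {j' : X e.1.2 | j' ∉ Y e.1.2})
        if i ∈ Y e.1.1 then
          if j ∈ Y e.1.2 then min (dvu + duv) (g (pIdx e i j)) else duv
        else if j ∈ Y e.1.2 then dvu else 0

omit [DecidableEq V] in
lemma dotp_lift (g : GVec X E) (x : ∀ v, X v) : dotp g (lift x) = energy g x := by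
  simp only [dotp, energy, lift, Fintype.sum_sum_type, Fintype.sum_sigma, Fintype.sum_prod_type,
    Fintype.sum_unique, mul_ite, mul_one, mul_zero, ite_and, Finset.sum_ite_irrel,
    Finset.sum_const_zero, Finset.sum_ite_eq, Finset.mem_univ, if_true, uIdx, pIdx, cIdx]
  ring

omit [DecidableEq V] [∀ v, Fintype (X v)] [∀ v, DecidableEq (X v)] in
lemma energy_Padj (p : ∀ v, X v → X v) (f : GVec X E) (x : ∀ v, X v) :
    energy (Padj p f) x = energy f (applySub p x) :=
  rfl

omit [DecidableEq V] in
lemma dotp_sub_Padj_lift (p : ∀ v, X v → X v) (f : GVec X E) (x : ∀ v, X v) :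
    dotp (f - Padj p f) (lift x) = energy f x - energy f (applySub p x) := by
  rw [← energy_Padj, ← dotp_lift, ← dotp_lift]
  exact sub_dotProduct _ _ _

omit [Fintype V] [DecidableEq V] in
lemma Pmap_lift (p : ∀ v, X v → X v) (x : ∀ v, X v) :
    Pmap (E := E) p (lift x) = lift (applySub p x) := by
  funext idx
  rcases idx with _ | ⟨v, i⟩ | ⟨e, i, j⟩
  · rfl
  · simp only [Pmap, lift, applySub, uIdx]
    rw [Fintype.sum_eq_single (x v)] <;> simp +contextual [eq_comm]
  · simp only [Pmap, lift, applySub, pIdx]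
    rw [Fintype.sum_eq_single (x e.1.1), Fintype.sum_eq_single (x e.1.2)] <;>
      simp +contextual [eq_comm]

omit [Fintype V] [DecidableEq V] [∀ v, Fintype (X v)] in
lemma lift_injective : Function.Injective (lift (X := X) (E := E)) := fun x y hxy =>
  funext fun v => by simpa [lift, uIdx] using congrFun hxy (uIdx v (y v))

theorem strictly_Lambda_improving_implies_strictly_improving_general
    (f : GVec X E) (Λ : Set (GVec X E))
    (hlift : ∀ x : ∀ v, X v, lift x ∈ Λ)
    (p : ∀ v, X v → X v)
    (h : StrictlyLambdaImproving Λ f p) :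
    StrictlyImproving f p := by
  intro x hx
  have hgap : 0 ≤ energy f x - energy f (applySub p x) :=
    dotp_sub_Padj_lift p f x ▸ h.1.2 ⟨lift x, hlift x, rfl⟩
  refine lt_of_le_of_ne (by linarith) fun heq => hx (lift_injective (E := E) ?_)
  rw [← Pmap_lift]
  exact h.2 _ (hlift x) (by rw [dotp_sub_Padj_lift, heq, sub_self])

theorem strictly_Lambda_improving_implies_strictly_improving
    [∀ v, Nonempty (X v)]
    (f : GVec X E) (Λ : Set (GVec X E)) (hcomp : IsCompact Λ) (hconv : Convex ℝ Λ)
    (hlift : ∀ x : ∀ v, X v, lift x ∈ Λ)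
    (p : ∀ v, X v → X v) (hidem : NodewiseIdem p)
    (h : StrictlyLambdaImproving Λ f p) :
    StrictlyImproving f p :=
  strictly_Lambda_improving_implies_strictly_improving_general f Λ hlift p h

end
end

section
/- Fix a test labeling y ∈ X, let p ∈ P^{2,y} be defined by sets Y_u ⊆ X_u \ {y_u} (so Y_u = {i : p_u(i) ≠ i}), and let g = f − [p]^T f. Let Λ be the local polytope and let φ be a dual feasible vector for min_{μ∈Λ} ⟨g, μ⟩ satisfying the normalization min_{i∈X_u} g^φ_u(i) = 0 for all u ∈ V and min_{i,j} g^φ_{uv}(i,j) = 0 for all uv ∈ E, and such that g^φ is arc consistent. Then at least one of the following holds: (a) g^φ_∅ = 0 and φ is dual optimal, i.e., g^φ_∅ = min_{μ∈Λ} ⟨g, μ⟩; (b) there exists u ∈ V with O_u(φ) ∩ Y_u ≠ ∅, where O_u(φ) = {i ∈ X_u : g^φ_u(i) = 0}. -/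
open Finset

noncomputable section

variable {V : Type*} [Fintype V] [DecidableEq V]
variable {X : V → Type*} [∀ v, Fintype (X v)] [∀ v, DecidableEq (X v)]
variable {E : Finset (V × V)}

/-! auxiliary lemmas -/

lemma lift_mem_localPolytope (x : ∀ v, X v) : lift x ∈ localPolytope X E := by
  refine ⟨?_, rfl, ?_, ?_, ?_⟩
  · rintro (_ | ⟨v, i⟩ | ⟨e, i, j⟩)
    · norm_num [lift]
    · simp only [lift]; split <;> norm_num
    · simp only [lift]; split <;> norm_num
  · intro u
    simp [lift, uIdx, cIdx]
  · intro e i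
    by_cases h : x e.1.1 = i <;> simp [lift, pIdx, uIdx, h]
  · intro e j
    by_cases h : x e.1.2 = j <;> simp [lift, pIdx, uIdx, h]

lemma dotp_expand (g μ : GVec X E) :
    dotp g μ = g cIdx * μ cIdx + (∑ v : V, ∑ i : X v, g (uIdx v i) * μ (uIdx v i)) +
      ∑ e : {e : V × V // e ∈ E}, ∑ i : X e.1.1, ∑ j : X e.1.2,
        g (pIdx e i j) * μ (pIdx e i j) := by
  simp only [dotp, Fintype.sum_sum_type, ← Finset.univ_sigma_univ, Finset.sum_sigma,
    Fintype.sum_prod_type, Finset.univ_unique, Finset.sum_singleton]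
  rw [← add_assoc]
  rfl

lemma dite_fwd_sum (φ : GDual X E) (μ : GVec X E) (e : {e : V × V // e ∈ E}) :
    (∑ v : V, ∑ i : X v,
        (if h : e.1.1 = v then φ.fwd e (cast (congrArg X h.symm) i) else 0) * μ (uIdx v i))
      = ∑ i : X e.1.1, φ.fwd e i * μ (uIdx e.1.1 i) := by
  rw [Finset.sum_eq_single e.1.1]
  · simp
  · intro v _ hv
    refine Finset.sum_eq_zero fun i _ => ?_
    rw [dif_neg (fun h => hv h.symm), zero_mul]
  · simp

lemma dite_bwd_sum (φ : GDual X E) (μ : GVec X E) (e : {e : V × V // e ∈ E}) :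
    (∑ v : V, ∑ i : X v,
        (if h : e.1.2 = v then φ.bwd e (cast (congrArg X h.symm) i) else 0) * μ (uIdx v i))
      = ∑ j : X e.1.2, φ.bwd e j * μ (uIdx e.1.2 j) := by
  rw [Finset.sum_eq_single e.1.2]
  · simp
  · intro v _ hv
    refine Finset.sum_eq_zero fun i _ => ?_
    rw [dif_neg (fun h => hv h.symm), zero_mul]
  · simp

lemma reparam (g : GVec X E) (φ : GDual X E) (μ : GVec X E) (hμ : μ ∈ localPolytope X E) :
    dotp g μ = repC g φ + (∑ v : V, ∑ i : X v, repUn g φ v i * μ (uIdx v i)) +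
      ∑ e : {e : V × V // e ∈ E}, ∑ i : X e.1.1, ∑ j : X e.1.2,
        repPw g φ e i j * μ (pIdx e i j) := by
  obtain ⟨hpos, hc, hun, hm1, hm2⟩ := hμ
  -- unary part
  have hUn : (∑ v : V, ∑ i : X v, repUn g φ v i * μ (uIdx v i))
      = (∑ v : V, ∑ i : X v, g (uIdx v i) * μ (uIdx v i))
        + (∑ e : {e : V × V // e ∈ E},
            ((∑ i : X e.1.1, ∑ j : X e.1.2, φ.fwd e i * μ (pIdx e i j))
              + ∑ j : X e.1.2, ∑ i : X e.1.1, φ.bwd e j * μ (pIdx e i j)))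
        - ∑ v : V, φ.nd v := by
    have key : ∀ v : V, ∑ i : X v, repUn g φ v i * μ (uIdx v i)
        = (∑ i : X v, g (uIdx v i) * μ (uIdx v i))
          + (∑ e : {e : V × V // e ∈ E}, ∑ i : X v,
              ((if h : e.1.1 = v then φ.fwd e (cast (congrArg X h.symm) i) else 0)
                + (if h : e.1.2 = v then φ.bwd e (cast (congrArg X h.symm) i) else 0))
                * μ (uIdx v i))
          - φ.nd v := by
      intro v
      have hsum1 : ∑ i : X v, μ (uIdx v i) = 1 := by rw [hun v, hc]
      calc ∑ i : X v, repUn g φ v i * μ (uIdx v i)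
          = ∑ i : X v, (g (uIdx v i) * μ (uIdx v i)
              + (∑ e : {e : V × V // e ∈ E},
                  ((if h : e.1.1 = v then φ.fwd e (cast (congrArg X h.symm) i) else 0)
                    + (if h : e.1.2 = v then φ.bwd e (cast (congrArg X h.symm) i) else 0)))
                  * μ (uIdx v i)
              - φ.nd v * μ (uIdx v i)) := by
            refine Finset.sum_congr rfl fun i _ => ?_
            rw [repUn]; ring
        _ = (∑ i : X v, g (uIdx v i) * μ (uIdx v i))
            + (∑ i : X v, (∑ e : {e : V × V // e ∈ E},
                ((if h : e.1.1 = v then φ.fwd e (cast (congrArg X h.symm) i) else 0)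
                  + (if h : e.1.2 = v then φ.bwd e (cast (congrArg X h.symm) i) else 0)))
                * μ (uIdx v i))
            - ∑ i : X v, φ.nd v * μ (uIdx v i) := by
            rw [Finset.sum_sub_distrib, Finset.sum_add_distrib]
        _ = _ := by
            rw [← Finset.mul_sum, hsum1, mul_one]
            congr 1
            congr 1
            rw [Finset.sum_congr rfl fun i (_ : i ∈ Finset.univ) => Finset.sum_mul _ _ _]
            exact Finset.sum_comm
    rw [Finset.sum_congr rfl fun v _ => key v, Finset.sum_sub_distrib,
      Finset.sum_add_distrib]
    congr 2
    rw [Finset.sum_comm]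
    refine Finset.sum_congr rfl fun e _ => ?_
    have := dite_fwd_sum φ μ e
    have := dite_bwd_sum φ μ e
    calc ∑ v : V, ∑ i : X v,
          ((if h : e.1.1 = v then φ.fwd e (cast (congrArg X h.symm) i) else 0)
            + (if h : e.1.2 = v then φ.bwd e (cast (congrArg X h.symm) i) else 0))
            * μ (uIdx v i)
        = (∑ v : V, ∑ i : X v,
            (if h : e.1.1 = v then φ.fwd e (cast (congrArg X h.symm) i) else 0) * μ (uIdx v i))
          + ∑ v : V, ∑ i : X v,
            (if h : e.1.2 = v then φ.bwd e (cast (congrArg X h.symm) i) else 0) * μ (uIdx v i) := by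
          rw [← Finset.sum_add_distrib]
          refine Finset.sum_congr rfl fun v _ => ?_
          rw [← Finset.sum_add_distrib]
          refine Finset.sum_congr rfl fun i _ => ?_
          ring
      _ = (∑ i : X e.1.1, φ.fwd e i * μ (uIdx e.1.1 i))
          + ∑ j : X e.1.2, φ.bwd e j * μ (uIdx e.1.2 j) := by
          rw [dite_fwd_sum, dite_bwd_sum]
      _ = _ := by
          congr 1
          · refine Finset.sum_congr rfl fun i _ => ?_
            rw [← hm1 e i, Finset.mul_sum]
          · refine Finset.sum_congr rfl fun j _ => ?_
            rw [← hm2 e j, Finset.mul_sum]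
  -- pairwise part
  have hPw : (∑ e : {e : V × V // e ∈ E}, ∑ i : X e.1.1, ∑ j : X e.1.2,
        repPw g φ e i j * μ (pIdx e i j))
      = ∑ e : {e : V × V // e ∈ E}, ((∑ i : X e.1.1, ∑ j : X e.1.2,
          g (pIdx e i j) * μ (pIdx e i j))
        - ((∑ i : X e.1.1, ∑ j : X e.1.2, φ.fwd e i * μ (pIdx e i j))
            + ∑ j : X e.1.2, ∑ i : X e.1.1, φ.bwd e j * μ (pIdx e i j))) := by
    refine Finset.sum_congr rfl fun e _ => ?_
    rw [Finset.sum_comm (f := fun j i => φ.bwd e j * μ (pIdx e i j))]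
    simp only [← Finset.sum_add_distrib, ← Finset.sum_sub_distrib]
    refine Finset.sum_congr rfl fun i _ => ?_
    refine Finset.sum_congr rfl fun j _ => ?_
    rw [repPw]; ring
  rw [dotp_expand, hUn, hPw, repC, hc]
  simp only [Finset.sum_sub_distrib, Finset.sum_add_distrib]
  ring

lemma gsub_cIdx (f : GVec X E) (p : ∀ v, X v → X v) :
    (f - Padj p f) cIdx = 0 := by
  have : Padj p f cIdx = f cIdx := rfl
  simp [this]

lemma gsub_uIdx (f : GVec X E) (y : ∀ v, X v) (Y : ∀ v, Finset (X v)) (v : V) (i : X v)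
    (hi : i ∉ Y v) : (f - Padj (subToOne y Y) f) (uIdx v i) = 0 := by
  have : Padj (subToOne y Y) f (uIdx v i) = f (uIdx v (subToOne y Y v i)) := rfl
  simp [this, subToOne, hi]

lemma gsub_pIdx (f : GVec X E) (y : ∀ v, X v) (Y : ∀ v, Finset (X v))
    (e : {e : V × V // e ∈ E}) (i : X e.1.1) (j : X e.1.2)
    (hi : i ∉ Y e.1.1) (hj : j ∉ Y e.1.2) :
    (f - Padj (subToOne y Y) f) (pIdx e i j) = 0 := by
  have : Padj (subToOne y Y) f (pIdx e i j)
      = f (pIdx e (subToOne y Y e.1.1 i) (subToOne y Y e.1.2 j)) := rfl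
  simp [this, subToOne, hi, hj]

theorem arc_consistent_dual_optimal_or_prunable
    [∀ v, Nonempty (X v)]
    (f : GVec X E) (y : ∀ v, X v) (Y : ∀ v, Finset (X v)) (hY : ∀ v, y v ∉ Y v)
    (g : GVec X E) (hg : g = f - Padj (subToOne y Y) f)
    (φ : GDual X E)
    (hfeas : DualFeasible g φ)
    (hnormU : ∀ u : V, ∃ i : X u, repUn g φ u i = 0)
    (hnormP : ∀ e : {e : V × V // e ∈ E},
      ∃ (i : X e.1.1) (j : X e.1.2), repPw g φ e i j = 0)
    (hac : ArcConsistent g φ) :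
    (repC g φ = 0 ∧
      IsLeast ((fun μ => dotp g μ) '' localPolytope X E) (repC g φ)) ∨
    ∃ u : V, ∃ i ∈ Y u, repUn g φ u i = 0 := by
  by_cases hb : ∃ u : V, ∃ i ∈ Y u, repUn g φ u i = 0
  · exact Or.inr hb
  left
  push_neg at hb
  choose x hx using hnormU
  have hxY : ∀ v, x v ∉ Y v := fun v hv => hb v (x v) hv (hx v)
  have hedge : ∀ e : {e : V × V // e ∈ E}, repPw g φ e (x e.1.1) (x e.1.2) = 0 := by
    intro e
    obtain ⟨j0, hj0⟩ := hac.2.1 e (x e.1.1) (hx e.1.1)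
    obtain ⟨i0, hi0⟩ := hac.2.2 e (x e.1.2) (hx e.1.2)
    have hj0u : repUn g φ e.1.2 j0 = 0 := (hac.1 e _ _ hj0).2
    have hi0u : repUn g φ e.1.1 i0 = 0 := (hac.1 e _ _ hi0).1
    have hj0Y : j0 ∉ Y e.1.2 := fun hmem => hb e.1.2 j0 hmem hj0u
    have hi0Y : i0 ∉ Y e.1.1 := fun hmem => hb e.1.1 i0 hmem hi0u
    have g1 : g (pIdx e (x e.1.1) j0) = 0 := by
      rw [hg]; exact gsub_pIdx f y Y e _ _ (hxY _) hj0Y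
    have g2 : g (pIdx e i0 (x e.1.2)) = 0 := by
      rw [hg]; exact gsub_pIdx f y Y e _ _ hi0Y (hxY _)
    have g3 : g (pIdx e i0 j0) = 0 := by
      rw [hg]; exact gsub_pIdx f y Y e _ _ hi0Y hj0Y
    have g4 : g (pIdx e (x e.1.1) (x e.1.2)) = 0 := by
      rw [hg]; exact gsub_pIdx f y Y e _ _ (hxY _) (hxY _)
    have f1 := hfeas.2 e i0 j0
    have f2 := hfeas.2 e (x e.1.1) (x e.1.2)
    rw [repPw] at hj0 hi0 f1 f2 ⊢
    rw [g1] at hj0; rw [g2] at hi0; rw [g3] at f1; rw [g4] at f2 ⊢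
    linarith
  have hlift := lift_mem_localPolytope (E := E) x
  have hdz : dotp g (lift x) = 0 := by
    have h0 : g cIdx = 0 := by rw [hg]; exact gsub_cIdx f (subToOne y Y)
    have hA : ∀ v : V, ∑ i : X v, g (uIdx v i) * lift (E := E) x (uIdx v i) = 0 := by
      intro v
      refine Finset.sum_eq_zero fun i _ => ?_
      by_cases h : x v = i
      · subst h; rw [hg, gsub_uIdx f y Y v _ (hxY v), zero_mul]
      · have hl : lift (E := E) x (uIdx v i) = 0 := by
          show (if x v = i then (1:ℝ) else 0) = 0
          rw [if_neg h]
        rw [hl, mul_zero]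
    have hB : ∀ e : {e : V × V // e ∈ E},
        ∑ i : X e.1.1, ∑ j : X e.1.2, g (pIdx e i j) * lift (E := E) x (pIdx e i j) = 0 := by
      intro e
      refine Finset.sum_eq_zero fun i _ => Finset.sum_eq_zero fun j _ => ?_
      by_cases h : x e.1.1 = i ∧ x e.1.2 = j
      · obtain ⟨h1, h2⟩ := h
        subst h1; subst h2
        rw [hg, gsub_pIdx f y Y e _ _ (hxY _) (hxY _), zero_mul]
      · have hl : lift (E := E) x (pIdx e i j) = 0 := by
          show (if x e.1.1 = i ∧ x e.1.2 = j then (1:ℝ) else 0) = 0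
          rw [if_neg h]
        rw [hl, mul_zero]
    rw [dotp_expand, h0, zero_mul,
      Finset.sum_eq_zero fun v (_ : v ∈ Finset.univ) => hA v,
      Finset.sum_eq_zero fun e (_ : e ∈ Finset.univ) => hB e]
    ring
  have hrep := reparam g φ (lift x) hlift
  have hU0 : ∀ v : V, ∑ i : X v, repUn g φ v i * lift (E := E) x (uIdx v i) = 0 := by
    intro v
    refine Finset.sum_eq_zero fun i _ => ?_
    by_cases h : x v = i
    · subst h; rw [hx v, zero_mul]
    · have hl : lift (E := E) x (uIdx v i) = 0 := by
        show (if x v = i then (1:ℝ) else 0) = 0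
        rw [if_neg h]
      rw [hl, mul_zero]
  have hP0 : ∀ e : {e : V × V // e ∈ E},
      ∑ i : X e.1.1, ∑ j : X e.1.2, repPw g φ e i j * lift (E := E) x (pIdx e i j) = 0 := by
    intro e
    refine Finset.sum_eq_zero fun i _ => Finset.sum_eq_zero fun j _ => ?_
    by_cases h : x e.1.1 = i ∧ x e.1.2 = j
    · obtain ⟨h1, h2⟩ := h
      subst h1; subst h2
      rw [hedge e, zero_mul]
    · have hl : lift (E := E) x (pIdx e i j) = 0 := by
        show (if x e.1.1 = i ∧ x e.1.2 = j then (1:ℝ) else 0) = 0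
        rw [if_neg h]
      rw [hl, mul_zero]
  rw [hdz, Finset.sum_eq_zero fun v (_ : v ∈ Finset.univ) => hU0 v,
    Finset.sum_eq_zero fun e (_ : e ∈ Finset.univ) => hP0 e] at hrep
  have hC0 : repC g φ = 0 := by linarith
  refine ⟨hC0, ⟨lift x, hlift, by show dotp g (lift x) = repC g φ; rw [hdz, hC0]⟩, ?_⟩
  rintro r ⟨μ, hμ, rfl⟩
  have h1 : 0 ≤ ∑ v : V, ∑ i : X v, repUn g φ v i * μ (uIdx v i) :=
    Finset.sum_nonneg fun v _ => Finset.sum_nonneg fun i _ =>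
      mul_nonneg (hfeas.1 v i) (hμ.1 _)
  have h2 : 0 ≤ ∑ e : {e : V × V // e ∈ E}, ∑ i : X e.1.1, ∑ j : X e.1.2,
      repPw g φ e i j * μ (pIdx e i j) :=
    Finset.sum_nonneg fun e _ => Finset.sum_nonneg fun i _ => Finset.sum_nonneg fun j _ =>
      mul_nonneg (hfeas.2 e i j) (hμ.1 _)
  have := reparam g φ μ hμ
  simp only [ge_iff_le]
  linarith

end
end

section
/- Fix a test labeling y ∈ X, let p ∈ P^{2,y} be defined by sets Y_v ⊆ X_v \ {y_v}, and let ḡ be the reduced cost vector for p. Then for every dual vector φ there exists a dual vector φ' such that: min_{i∈X_u} ḡ^{φ'}_u(i) = 0 for every u ∈ V; for every uv ∈ E, every i ∈ X_u and every j ∈ X_v, min_{i'∈X_u} ḡ^{φ'}_{uv}(i',j) = 0 and min_{j'∈X_v} ḡ^{φ'}_{uv}(i,j') = 0 (in particular φ' is dual feasible); and if φ is dual feasible (ḡ^φ ≥ 0 componentwise) then the lower bound does not decrease: ḡ^{φ'}_∅ ≥ ḡ^φ_∅. -/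
open Finset

noncomputable section

variable {V : Type*} [Fintype V] [DecidableEq V]
variable {X : V → Type*} [∀ v, Fintype (X v)] [∀ v, DecidableEq (X v)]
variable {E : Finset (V × V)}

theorem dual_correct_exists
    [∀ v, Nonempty (X v)]
    (f : GVec X E) (y : ∀ v, X v) (Y : ∀ v, Finset (X v)) (hY : ∀ v, y v ∉ Y v)
    (gb : GVec X E) (hgb : gb = reduced f y Y)
    (φ : GDual X E) :
    ∃ φ' : GDual X E,
      (∀ u : V, (∀ i : X u, 0 ≤ repUn gb φ' u i) ∧ ∃ i : X u, repUn gb φ' u i = 0) ∧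
      (∀ (e : {e : V × V // e ∈ E}) (j : X e.1.2),
        (∀ i' : X e.1.1, 0 ≤ repPw gb φ' e i' j) ∧
          ∃ i' : X e.1.1, repPw gb φ' e i' j = 0) ∧
      (∀ (e : {e : V × V // e ∈ E}) (i : X e.1.1),
        (∀ j' : X e.1.2, 0 ≤ repPw gb φ' e i j') ∧
          ∃ j' : X e.1.2, repPw gb φ' e i j' = 0) ∧
      (DualFeasible gb φ → repC gb φ ≤ repC gb φ') := by
  classical
  -- column normalization
  let bwd' : ∀ e : {e : V × V // e ∈ E}, X e.1.2 → ℝ :=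
    fun e j => (univ : Finset (X e.1.1)).inf' univ_nonempty
      (fun i => gb (pIdx e i j) - φ.fwd e i)
  -- row normalization
  let fwd' : ∀ e : {e : V × V // e ∈ E}, X e.1.1 → ℝ :=
    fun e i => (univ : Finset (X e.1.2)).inf' univ_nonempty
      (fun j => gb (pIdx e i j) - bwd' e j)
  have hfwd_ge : ∀ (e : {e : V × V // e ∈ E}) (i : X e.1.1), φ.fwd e i ≤ fwd' e i := by
    intro e i
    apply Finset.le_inf'
    intro j _
    have : bwd' e j ≤ gb (pIdx e i j) - φ.fwd e i :=
      Finset.inf'_le _ (mem_univ i)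
    linarith
  -- node normalization
  let nd' : V → ℝ := fun u => (univ : Finset (X u)).inf' univ_nonempty
    (fun i => gb (uIdx u i) + ∑ e : {e : V × V // e ∈ E},
      ((if h : e.1.1 = u then fwd' e (cast (congrArg X h.symm) i) else 0) +
       (if h : e.1.2 = u then bwd' e (cast (congrArg X h.symm) i) else 0)))
  refine ⟨⟨fwd', bwd', nd'⟩, ?_, ?_, ?_, ?_⟩
  · -- unary conditions
    intro u
    constructor
    · intro i
      have h : nd' u ≤ gb (uIdx u i) + ∑ e : {e : V × V // e ∈ E},
          ((if h : e.1.1 = u then fwd' e (cast (congrArg X h.symm) i) else 0) +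
           (if h : e.1.2 = u then bwd' e (cast (congrArg X h.symm) i) else 0)) :=
        Finset.inf'_le _ (mem_univ i)
      simp only [repUn]
      linarith
    · obtain ⟨i, _, hi⟩ := Finset.exists_mem_eq_inf'
        (univ_nonempty : (univ : Finset (X u)).Nonempty)
        (fun i => gb (uIdx u i) + ∑ e : {e : V × V // e ∈ E},
          ((if h : e.1.1 = u then fwd' e (cast (congrArg X h.symm) i) else 0) +
           (if h : e.1.2 = u then bwd' e (cast (congrArg X h.symm) i) else 0)))
      refine ⟨i, ?_⟩
      simp only [repUn]
      have : nd' u = gb (uIdx u i) + ∑ e : {e : V × V // e ∈ E},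
          ((if h : e.1.1 = u then fwd' e (cast (congrArg X h.symm) i) else 0) +
           (if h : e.1.2 = u then bwd' e (cast (congrArg X h.symm) i) else 0)) := hi
      linarith [this]
  · -- column conditions
    intro e j
    have hrow : ∀ i' : X e.1.1, 0 ≤ repPw gb ⟨fwd', bwd', nd'⟩ e i' j := by
      intro i'
      have h : fwd' e i' ≤ gb (pIdx e i' j) - bwd' e j :=
        Finset.inf'_le _ (mem_univ j)
      simp only [repPw]
      linarith
    refine ⟨hrow, ?_⟩
    obtain ⟨i, _, hi⟩ := Finset.exists_mem_eq_inf'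
      (univ_nonempty : (univ : Finset (X e.1.1)).Nonempty)
      (fun i => gb (pIdx e i j) - φ.fwd e i)
    refine ⟨i, le_antisymm ?_ (hrow i)⟩
    have hb : bwd' e j = gb (pIdx e i j) - φ.fwd e i := hi
    have := hfwd_ge e i
    simp only [repPw]
    rw [hb]
    linarith
  · -- row conditions
    intro e i
    have hrow : ∀ j' : X e.1.2, 0 ≤ repPw gb ⟨fwd', bwd', nd'⟩ e i j' := by
      intro j'
      have h : fwd' e i ≤ gb (pIdx e i j') - bwd' e j' :=
        Finset.inf'_le _ (mem_univ j')
      simp only [repPw]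
      linarith
    refine ⟨hrow, ?_⟩
    obtain ⟨j, _, hj⟩ := Finset.exists_mem_eq_inf'
      (univ_nonempty : (univ : Finset (X e.1.2)).Nonempty)
      (fun j => gb (pIdx e i j) - bwd' e j)
    refine ⟨j, ?_⟩
    have hf : fwd' e i = gb (pIdx e i j) - bwd' e j := hj
    simp only [repPw]
    rw [hf]
    ring
  · -- bound does not decrease
    intro ⟨hun, hpw⟩
    have hbwd_ge : ∀ (e : {e : V × V // e ∈ E}) (j : X e.1.2), φ.bwd e j ≤ bwd' e j := by
      intro e j
      apply Finset.le_inf'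
      intro i _
      have := hpw e i j
      simp only [repPw] at this
      linarith
    have hnd : ∀ u : V, φ.nd u ≤ nd' u := by
      intro u
      apply Finset.le_inf'
      intro i _
      have h1 := hun u i
      simp only [repUn] at h1
      have h2 : (∑ e : {e : V × V // e ∈ E},
          ((if h : e.1.1 = u then φ.fwd e (cast (congrArg X h.symm) i) else 0) +
           (if h : e.1.2 = u then φ.bwd e (cast (congrArg X h.symm) i) else 0))) ≤
          (∑ e : {e : V × V // e ∈ E},
          ((if h : e.1.1 = u then fwd' e (cast (congrArg X h.symm) i) else 0) +
           (if h : e.1.2 = u then bwd' e (cast (congrArg X h.symm) i) else 0))) := by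
        apply Finset.sum_le_sum
        intro e _
        apply add_le_add
        · split
          · exact hfwd_ge e _
          · exact le_refl 0
        · split
          · exact hbwd_ge e _
          · exact le_refl 0
      linarith
    simp only [repC]
    have : (∑ u : V, φ.nd u) ≤ ∑ u : V, nd' u := Finset.sum_le_sum (fun u _ => hnd u)
    linarith

end
end

section
/- Fix a test labeling y ∈ X and a compact convex set Λ ⊆ ℝ^I. Let p, q ∈ P^{2,y} with q ≤ p and let g = f − [p]^T f. Then q is strictly Λ-improving for f (q ∈ S_f) if and only if q is strictly Λ-improving for g (q ∈ S_g). -/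
open Finset

noncomputable section

variable {V : Type*} [Fintype V] [DecidableEq V]
variable {X : V → Type*} [∀ v, Fintype (X v)] [∀ v, DecidableEq (X v)]
variable {E : Finset (V × V)}

theorem verification_cost_preserves_strict_improvement
    [∀ v, Nonempty (X v)]
    (f : GVec X E) (y : ∀ v, X v) (Λ : Set (GVec X E))
    (hcomp : IsCompact Λ) (hconv : Convex ℝ Λ)
    (p q : ∀ v, X v → X v) (hp : InPtwo y p) (hq : InPtwo y q)
    (hle : ∀ v : V, Set.range (p v) ⊆ Set.range (q v)) :
    StrictlyLambdaImproving Λ f q ↔ StrictlyLambdaImproving Λ (f - Padj p f) q := by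
  obtain ⟨Yp, hyp, hpdef⟩ := hp
  obtain ⟨Yq, hyq, hqdef⟩ := hq
  have hcomp' : ∀ (v : V) (i : X v), p v (q v i) = p v i := by
    intro v i
    rw [hqdef]
    by_cases hi : i ∈ Yq v
    · simp only [hi, if_pos]
      have hiYp : i ∈ Yp v := by
        by_contra hnot
        have : i ∈ Set.range (p v) := ⟨i, by rw [hpdef]; simp [hnot]⟩
        obtain ⟨j, hj⟩ := hle v this
        rw [hqdef] at hj
        by_cases hjq : j ∈ Yq v
        · simp only [hjq, if_pos] at hj; exact hyq v (hj ▸ hi)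
        · simp only [hjq, if_neg, not_false_iff] at hj; subst hj; exact hjq hi
      rw [hpdef, hpdef, if_neg (hyp v), if_pos hiYp]
    · simp [hi]
  have hkey : f - Padj q f = (f - Padj p f) - Padj q (f - Padj p f) := by
    funext idx
    rcases idx with _ | ⟨⟨v, i⟩ | ⟨e, i, j⟩⟩ <;>
      simp only [Pi.sub_apply, Padj, cIdx, uIdx, pIdx, hcomp'] <;> ring
  unfold StrictlyLambdaImproving
  rw [← hkey]

end
end
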